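/- arXiv:2310.04682 — 5 statements merged into one kernel-verified Lean document; each statement's English description precedes it below -/
import Mathlib

section
/- For the Laplacian tensor L_E of a single hyperedge E = {v_1, ..., v_{m+1}} in an (m+1)-uniform hypergraph on n vertices, the quadratic form x^T L_E x (defined via the compatible tensor product) equals the sum over all pairs 1 ≤ i < j ≤ m+1 of (x_i - x_j)^2; in particular it is nonnegative for all x ∈ R^n. -/
open Finset

/-- Quadratic form `x^T T x` of an (m+1)st order tensor (given by its first `m` indices and
its last index) under the compatible tensor product:
`x^T T x = ∑_{i_1,…,i_m,j} T_{i_1,…,i_m,j} (x_{i_1}+⋯+x_{i_m}) x_j`. -/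
def qf {n m : ℕ} (T : (Fin m → Fin n) → Fin n → ℝ) (x : Fin n → ℝ) : ℝ :=
  ∑ j : Fin n, (∑ i : Fin m → Fin n, T i j * ∑ p : Fin m, x (i p)) * x j

/-- Degree sequence of a tensor (column sums, so that the degree diagonal is consistent). -/
def degT {n m : ℕ} (T : (Fin m → Fin n) → Fin n → ℝ) (j : Fin n) : ℝ :=
  ∑ i : Fin m → Fin n, T i j

/-- Laplacian tensor `L = D - A`, where `D` is the degree diagonal tensor. -/
def LapT {n m : ℕ} (A : (Fin m → Fin n) → Fin n → ℝ) : (Fin m → Fin n) → Fin n → ℝ :=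
  fun i j => (if ∀ p, i p = j then degT A j else 0) - A i j

/-- Adjacency tensor of the single hyperedge `e`: entry `1/m!` exactly when the `m+1` indices
are distinct and form the set `e`. -/
noncomputable def adjE (m : ℕ) {n : ℕ} (e : Finset (Fin n)) : (Fin m → Fin n) → Fin n → ℝ :=
  fun i j =>
    if Function.Injective (Fin.snoc i j : Fin (m+1) → Fin n) ∧
        Finset.image (Fin.snoc i j : Fin (m+1) → Fin n) Finset.univ = e
    then 1 / (Nat.factorial m : ℝ) else 0

lemma image_snoc {n m : ℕ} (i : Fin m → Fin n) (j : Fin n) :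
    Finset.image (Fin.snoc i j : Fin (m+1) → Fin n) Finset.univ
      = insert j (Finset.image i Finset.univ) := by
  ext k
  simp only [Finset.mem_image, Finset.mem_insert, Finset.mem_univ, true_and]
  constructor
  · rintro ⟨p, rfl⟩
    rcases Fin.eq_castSucc_or_eq_last p with ⟨q, rfl⟩ | rfl
    · right; exact ⟨q, by simp⟩
    · left; simp
  · rintro (rfl | ⟨q, rfl⟩)
    · exact ⟨Fin.last m, by simp⟩
    · exact ⟨q.castSucc, by simp⟩

lemma snoc_cond {n m : ℕ} {e : Finset (Fin n)} (he : e.card = m + 1)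
    (i : Fin m → Fin n) (j : Fin n) :
    (Function.Injective (Fin.snoc i j : Fin (m+1) → Fin n) ∧
        Finset.image (Fin.snoc i j : Fin (m+1) → Fin n) Finset.univ = e)
    ↔ (j ∈ e ∧ Function.Injective i ∧ Finset.image i Finset.univ = e.erase j) := by
  constructor
  · rintro ⟨hinj, him⟩
    have hji : j ∉ Finset.image i Finset.univ := by
      simp only [Finset.mem_image, Finset.mem_univ, true_and]
      rintro ⟨p, hp⟩
      have : (Fin.snoc i j : Fin (m+1) → Fin n) p.castSucc
          = (Fin.snoc i j : Fin (m+1) → Fin n) (Fin.last m) := by simp [hp]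
      have := hinj this
      exact absurd this (by simp [Fin.ext_iff, Fin.lt_iff_val_lt_val]; omega)
    refine ⟨?_, ?_, ?_⟩
    · rw [← him, image_snoc]; exact Finset.mem_insert_self _ _
    · intro a b hab
      have : (Fin.snoc i j : Fin (m+1) → Fin n) a.castSucc
          = (Fin.snoc i j : Fin (m+1) → Fin n) b.castSucc := by simp [hab]
      simpa [Fin.ext_iff] using hinj this
    · rw [← him, image_snoc, Finset.erase_insert hji]
  · rintro ⟨hj, hinj, him⟩
    have hji : j ∉ Finset.image i Finset.univ := by
      rw [him]; exact Finset.notMem_erase _ _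
    constructor
    · intro a b hab
      rcases Fin.eq_castSucc_or_eq_last a with ⟨a', rfl⟩ | rfl <;>
        rcases Fin.eq_castSucc_or_eq_last b with ⟨b', rfl⟩ | rfl
      · rw [Fin.snoc_castSucc, Fin.snoc_castSucc] at hab
        exact congrArg Fin.castSucc (hinj hab)
      · exfalso
        rw [Fin.snoc_last, Fin.snoc_castSucc] at hab
        exact hji (Finset.mem_image.mpr ⟨a', Finset.mem_univ _, hab⟩)
      · exfalso
        rw [Fin.snoc_last, Fin.snoc_castSucc] at hab
        exact hji (Finset.mem_image.mpr ⟨b', Finset.mem_univ _, hab.symm⟩)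
      · rfl
    · rw [image_snoc, him, Finset.insert_erase hj]

lemma sum_over_inj {n m : ℕ} (s : Finset (Fin n)) (hs : s.card = m)
    (F : (Fin m → Fin n) → ℝ) :
    ∑ i : Fin m → Fin n,
        (if Function.Injective i ∧ Finset.image i Finset.univ = s then F i else 0)
      = ∑ σ : Equiv.Perm (Fin m),
          F (fun p => ((s.equivFin.symm (Fin.cast hs.symm (σ p))) : Fin n)) := by
  classical
  set es : Fin m → Fin n := fun p => ((s.equivFin.symm (Fin.cast hs.symm p)) : Fin n) with hes
  have hes_inj : Function.Injective es := by
    intro a b hab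
    have := Subtype.val_injective hab
    simpa [Fin.ext_iff] using s.equivFin.symm.injective this
  have hes_mem : ∀ p, es p ∈ s := fun p => (s.equivFin.symm (Fin.cast hs.symm p)).2
  have hes_im : Finset.image es Finset.univ = s := by
    apply Finset.eq_of_subset_of_card_le
    · intro k hk
      rcases Finset.mem_image.mp hk with ⟨p, _, rfl⟩
      exact hes_mem p
    · rw [Finset.card_image_of_injective _ hes_inj, hs, Finset.card_univ, Fintype.card_fin]
  rw [← Finset.sum_filter]
  symm
  apply Finset.sum_bij (fun (σ : Equiv.Perm (Fin m)) _ => fun p => es (σ p))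
  · intro σ _
    rw [Finset.mem_filter]
    refine ⟨Finset.mem_univ _, hes_inj.comp σ.injective, ?_⟩
    rw [← hes_im]
    ext k
    simp only [Finset.mem_image, Finset.mem_univ, true_and]
    exact ⟨fun ⟨p, hp⟩ => ⟨σ p, hp⟩, fun ⟨p, hp⟩ => ⟨σ.symm p, by simpa using hp⟩⟩
  · intro σ _ τ _ h
    ext p
    exact Fin.val_eq_of_eq (hes_inj (congrFun h p))
  · intro b hb
    rw [Finset.mem_filter] at hb
    obtain ⟨-, hbinj, hbim⟩ := hb
    have hbmem : ∀ p, b p ∈ s := fun p => by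
      rw [← hbim]; exact Finset.mem_image.mpr ⟨p, Finset.mem_univ _, rfl⟩
    set g : Fin m → Fin m := fun p => Fin.cast hs (s.equivFin ⟨b p, hbmem p⟩) with hg
    have hginj : Function.Injective g := by
      intro a c hac
      apply hbinj
      have h1 : s.equivFin ⟨b a, hbmem a⟩ = s.equivFin ⟨b c, hbmem c⟩ := by
        apply Fin.ext
        simpa [hg, Fin.ext_iff] using hac
      have := s.equivFin.injective h1
      exact congrArg Subtype.val this
    have hgbij := Finite.injective_iff_bijective.mp hginj
    refine ⟨Equiv.ofBijective g hgbij, Finset.mem_univ _, ?_⟩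
    funext p
    show es (g p) = b p
    simp [hes, hg, Fin.ext_iff]
  · intro σ _
    rfl

lemma sum_inj_const {n m : ℕ} (s : Finset (Fin n)) (hs : s.card = m) (c : ℝ) :
    ∑ i : Fin m → Fin n,
        (if Function.Injective i ∧ Finset.image i Finset.univ = s then c else 0)
      = (m.factorial : ℝ) * c := by
  rw [sum_over_inj s hs (fun _ => c)]
  rw [Finset.sum_const, Finset.card_univ, Fintype.card_perm, Fintype.card_fin, nsmul_eq_mul]

lemma sum_inj_x {n m : ℕ} (s : Finset (Fin n)) (hs : s.card = m) (x : Fin n → ℝ) :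
    ∑ i : Fin m → Fin n,
        (if Function.Injective i ∧ Finset.image i Finset.univ = s
          then ∑ p : Fin m, x (i p) else 0)
      = (m.factorial : ℝ) * ∑ k ∈ s, x k := by
  rw [sum_over_inj s hs]
  have key : ∀ σ : Equiv.Perm (Fin m),
      ∑ p : Fin m, x ((s.equivFin.symm (Fin.cast hs.symm (σ p))) : Fin n)
        = ∑ k ∈ s, x k := by
    intro σ
    rw [Equiv.sum_comp σ (fun p => x ((s.equivFin.symm (Fin.cast hs.symm p)) : Fin n))]
    calc ∑ p : Fin m, x ((s.equivFin.symm (Fin.cast hs.symm p)) : Fin n)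
        = ∑ q : Fin s.card, x ((s.equivFin.symm q : Fin n)) :=
          Equiv.sum_comp (finCongr hs.symm) (fun q => x ((s.equivFin.symm q : Fin n)))
      _ = ∑ k : {y // y ∈ s}, x k := Equiv.sum_comp s.equivFin.symm (fun k => x k)
      _ = ∑ k ∈ s, x k := Finset.sum_coe_sort s x
  simp_rw [key]
  rw [Finset.sum_const, Finset.card_univ, Fintype.card_perm, Fintype.card_fin, nsmul_eq_mul]

lemma alg_final {n m : ℕ} (e : Finset (Fin n)) (he : e.card = m + 1) (x : Fin n → ℝ) :
    ∑ j ∈ e, ((m : ℝ) * x j * x j - (∑ k ∈ e.erase j, x k) * x j)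
      = ∑ i ∈ e, ∑ j ∈ e, if i < j then (x i - x j)^2 else 0 := by
  have h1 : ∀ j ∈ e, ((m : ℝ) * x j * x j - (∑ k ∈ e.erase j, x k) * x j)
      = ∑ k ∈ e, ((if k < j then x j * x j - x k * x j else 0)
          + (if j < k then x j * x j - x k * x j else 0)) := by
    intro j hj
    have hc : (e.erase j).card = m := by rw [Finset.card_erase_of_mem hj, he]; rfl
    have : (m : ℝ) * x j * x j = ∑ k ∈ e.erase j, x j * x j := by
      rw [Finset.sum_const, hc, nsmul_eq_mul]; ring
    rw [this, Finset.sum_mul, ← Finset.sum_sub_distrib, ← Finset.filter_ne',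
      Finset.sum_filter]
    apply Finset.sum_congr rfl
    intro k _
    rcases lt_trichotomy k j with h | h | h
    · simp [h, ne_of_lt h, not_lt_of_gt h]
    · simp [h]
    · simp [h, (ne_of_lt h).symm, not_lt_of_gt h]
  rw [Finset.sum_congr rfl h1]
  simp_rw [Finset.sum_add_distrib]
  rw [Finset.sum_comm]
  rw [← Finset.sum_add_distrib]
  apply Finset.sum_congr rfl; intro i _
  rw [← Finset.sum_add_distrib]
  apply Finset.sum_congr rfl; intro j _
  by_cases h : i < j
  · simp only [h, if_true]; ring
  · simp only [h, if_false]; ring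

/-- The quadratic form of the Laplacian tensor of a single hyperedge `E = {v_1,…,v_{m+1}}`
equals `∑_{i<j ∈ E} (x_i - x_j)^2`; in particular it is nonnegative. -/
theorem stmt0 {n m : ℕ} (e : Finset (Fin n)) (he : e.card = m + 1) (x : Fin n → ℝ) :
    (qf (LapT (adjE m e)) x = ∑ i ∈ e, ∑ j ∈ e, if i < j then (x i - x j)^2 else 0) ∧
    0 ≤ qf (LapT (adjE m e)) x := by
  classical
  have hm : (m.factorial : ℝ) ≠ 0 := Nat.cast_ne_zero.mpr (Nat.factorial_ne_zero m)
  have key : qf (LapT (adjE m e)) x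
      = ∑ i ∈ e, ∑ j ∈ e, if i < j then (x i - x j)^2 else 0 := by
    rw [← alg_final e he x]
    unfold qf LapT
    have hdeg : ∀ j : Fin n, degT (adjE m e) j = if j ∈ e then 1 else 0 := by
      intro j
      unfold degT adjE
      simp_rw [snoc_cond he]
      by_cases hj : j ∈ e
      · have hc : (e.erase j).card = m := by rw [Finset.card_erase_of_mem hj, he]; rfl
        simp only [hj, true_and, if_true]
        rw [sum_inj_const (e.erase j) hc]
        field_simp
      · simp [hj]
    have hterm : ∀ j : Fin n,
        (∑ i : Fin m → Fin n,
          ((if ∀ p, i p = j then degT (adjE m e) j else 0) - adjE m e i j) * ∑ p : Fin m, x (i p))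
        = (if j ∈ e then (m : ℝ) * x j - ∑ k ∈ e.erase j, x k else 0) := by
      intro j
      simp_rw [sub_mul, Finset.sum_sub_distrib]
      have hD : (∑ i : Fin m → Fin n,
          (if ∀ p, i p = j then degT (adjE m e) j else 0) * ∑ p : Fin m, x (i p))
          = (if j ∈ e then (m : ℝ) * x j else 0) := by
        have : ∀ i : Fin m → Fin n, (∀ p, i p = j) ↔ i = fun _ => j := by
          intro i; constructor
          · intro h; funext p; exact h p
          · intro h p; rw [h]
        simp_rw [this, ite_mul, zero_mul]
        rw [Finset.sum_ite_eq' Finset.univ (fun _ => j)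
          (fun i => degT (adjE m e) j * ∑ p : Fin m, x (i p))]
        simp only [Finset.mem_univ, if_true, hdeg j]
        rw [Finset.sum_const, Finset.card_univ, Fintype.card_fin, nsmul_eq_mul]
        by_cases hj : j ∈ e <;> simp [hj]
      have hA : (∑ i : Fin m → Fin n, adjE m e i j * ∑ p : Fin m, x (i p))
          = (if j ∈ e then ∑ k ∈ e.erase j, x k else 0) := by
        unfold adjE
        simp_rw [snoc_cond he, ite_mul, zero_mul]
        by_cases hj : j ∈ e
        · have hc : (e.erase j).card = m := by rw [Finset.card_erase_of_mem hj, he]; rfl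
          simp only [hj, true_and, if_true]
          have : ∀ i : Fin m → Fin n,
              (if Function.Injective i ∧ Finset.image i Finset.univ = e.erase j
                then 1 / (m.factorial : ℝ) * ∑ p : Fin m, x (i p) else 0)
              = 1 / (m.factorial : ℝ) *
                (if Function.Injective i ∧ Finset.image i Finset.univ = e.erase j
                  then ∑ p : Fin m, x (i p) else 0) := by
            intro i; split <;> simp
          simp_rw [this]
          rw [← Finset.mul_sum, sum_inj_x (e.erase j) hc]
          field_simp
        · simp [hj]
      rw [hD, hA]
      by_cases hj : j ∈ e <;> simp [hj]
    simp_rw [hterm, ite_mul, zero_mul]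
    rw [Finset.sum_ite_mem, Finset.univ_inter]
    apply Finset.sum_congr rfl
    intro j _
    ring
  refine ⟨key, ?_⟩
  rw [key]
  apply Finset.sum_nonneg; intro i _
  apply Finset.sum_nonneg; intro j _
  split
  · exact sq_nonneg _
  · exact le_refl 0
end

section
/- The quadratic form of the Laplacian tensor L of an (m+1)-uniform undirected hypergraph G satisfies x^T L x = ∑_{E ∈ E} ∑_{i<j, v_i,v_j ∈ E} (x_i - x_j)^2 ≥ 0 for all x ∈ R^n, i.e., L is positive semi-definite as a quadratic form. -/
open Finset

/-- Adjacency tensor of an (m+1)-uniform hypergraph with hyperedge set `Es`: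
entry `1/m!` exactly when the `m+1` indices are distinct and form a hyperedge. -/
noncomputable def adjH (m : ℕ) {n : ℕ} (Es : Finset (Finset (Fin n))) : (Fin m → Fin n) → Fin n → ℝ :=
  fun i j =>
    if Function.Injective (Fin.snoc i j : Fin (m+1) → Fin n) ∧
        Finset.image (Fin.snoc i j : Fin (m+1) → Fin n) Finset.univ ∈ Es
    then 1 / (Nat.factorial m : ℝ) else 0

section aux
variable {n m : ℕ}

lemma cond_iff (e : Finset (Fin n)) (he : e.card = m+1) (j : Fin n) (i : Fin m → Fin n) :
    (Function.Injective (Fin.snoc i j : Fin (m+1) → Fin n) ∧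
      Finset.image (Fin.snoc i j : Fin (m+1) → Fin n) Finset.univ = e)
    ↔ j ∈ e ∧ Function.Injective i ∧ ∀ p, i p ∈ e.erase j := by
  constructor
  · rintro ⟨hinj, him⟩
    have hj : j ∈ e := by
      rw [← him]
      exact Finset.mem_image.2 ⟨Fin.last m, Finset.mem_univ _, Fin.snoc_last _ _⟩
    refine ⟨hj, ?_, ?_⟩
    · intro a b hab
      have h2 : (Fin.snoc i j : Fin (m+1) → Fin n) a.castSucc
          = (Fin.snoc i j : Fin (m+1) → Fin n) b.castSucc := by
        simpa using hab
      simpa using hinj h2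
    · intro p
      refine Finset.mem_erase.2 ⟨?_, ?_⟩
      · intro h
        have h2 : (Fin.snoc i j : Fin (m+1) → Fin n) p.castSucc
            = (Fin.snoc i j : Fin (m+1) → Fin n) (Fin.last m) := by
          simp [h]
        exact absurd (hinj h2) (Fin.castSucc_lt_last p).ne
      · rw [← him]
        exact Finset.mem_image.2 ⟨p.castSucc, Finset.mem_univ _, Fin.snoc_castSucc _ _ _⟩
  · rintro ⟨hj, hinj, hmem⟩
    have hne : ∀ p, i p ≠ j := fun p => (Finset.mem_erase.1 (hmem p)).1
    have hinj' : Function.Injective (Fin.snoc i j : Fin (m+1) → Fin n) := by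
      intro a b hab
      rcases Fin.eq_castSucc_or_eq_last a with ⟨a', rfl⟩ | rfl <;>
        rcases Fin.eq_castSucc_or_eq_last b with ⟨b', rfl⟩ | rfl
      · simp only [Fin.snoc_castSucc] at hab
        exact congrArg _ (hinj hab)
      · simp only [Fin.snoc_castSucc, Fin.snoc_last] at hab
        exact absurd hab (hne a')
      · simp only [Fin.snoc_castSucc, Fin.snoc_last] at hab
        exact absurd hab.symm (hne b')
      · rfl
    refine ⟨hinj', ?_⟩
    apply Finset.eq_of_subset_of_card_le
    · intro v hv
      rcases Finset.mem_image.1 hv with ⟨a, -, rfl⟩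
      rcases Fin.eq_castSucc_or_eq_last a with ⟨a', rfl⟩ | rfl
      · rw [Fin.snoc_castSucc]; exact Finset.mem_of_mem_erase (hmem a')
      · rwa [Fin.snoc_last]
    · rw [he, Finset.card_image_of_injective _ hinj', Finset.card_univ, Fintype.card_fin]

lemma card_cond (s : Finset (Fin n)) (hs : s.card = m) :
    (Finset.univ.filter (fun i : Fin m → Fin n =>
      Function.Injective i ∧ ∀ p, i p ∈ s)).card = m.factorial := by
  have e1 : {i : Fin m → Fin n // Function.Injective i ∧ ∀ p, i p ∈ s} ≃ (Fin m ↪ {v // v ∈ s}) :=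
    { toFun := fun i => ⟨fun p => ⟨i.1 p, i.2.2 p⟩, fun a b h => i.2.1 (congrArg Subtype.val h)⟩
      invFun := fun g => ⟨fun p => (g p : Fin n),
        fun a b h => g.injective (Subtype.ext h), fun p => (g p).2⟩
      left_inv := fun i => rfl
      right_inv := fun g => rfl }
  have := (Fintype.card_congr e1).symm
  rw [Fintype.card_embedding_eq, Fintype.card_coe, hs, Fintype.card_fin,
    Nat.descFactorial_self] at this
  rw [this, Fintype.card_subtype]

lemma sum_cond (e : Finset (Fin n)) (he : e.card = m+1) (j : Fin n)
    (g : (Fin m → Fin n) → ℝ) (c : ℝ)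
    (hg : j ∈ e → ∀ i : Fin m → Fin n, Function.Injective i → (∀ p, i p ∈ e.erase j) → g i = c) :
    (∑ i : Fin m → Fin n, if Function.Injective (Fin.snoc i j : Fin (m+1) → Fin n) ∧
      Finset.image (Fin.snoc i j : Fin (m+1) → Fin n) Finset.univ = e
      then (1 / (m.factorial : ℝ)) * g i else 0) = if j ∈ e then c else 0 := by
  simp only [cond_iff e he j]
  by_cases hj : j ∈ e
  · simp only [hj, true_and, if_pos]
    rw [Finset.sum_ite, Finset.sum_const_zero, add_zero]
    have hcongr : ∀ i ∈ Finset.univ.filter (fun i : Fin m → Fin n =>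
        Function.Injective i ∧ ∀ p, i p ∈ e.erase j),
        (1 / (m.factorial : ℝ)) * g i = (1 / (m.factorial : ℝ)) * c := by
      intro i hi
      rw [Finset.mem_filter] at hi
      rw [hg hj i hi.2.1 hi.2.2]
    rw [Finset.sum_congr rfl hcongr, Finset.sum_const, card_cond (e.erase j)
      (by rw [Finset.card_erase_of_mem hj, he]; rfl), nsmul_eq_mul]
    field_simp
  · simp [hj]

lemma sum_over_image (i : Fin m → Fin n) (hinj : Function.Injective i)
    (s : Finset (Fin n)) (hs : s.card = m) (hmem : ∀ p, i p ∈ s) (x : Fin n → ℝ) :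
    ∑ p : Fin m, x (i p) = ∑ v ∈ s, x v := by
  have him : Finset.image i Finset.univ = s := by
    apply Finset.eq_of_subset_of_card_le
    · intro v hv; rcases Finset.mem_image.1 hv with ⟨p, -, rfl⟩; exact hmem p
    · rw [hs, Finset.card_image_of_injective _ hinj, Finset.card_univ, Fintype.card_fin]
  rw [← him, Finset.sum_image (fun a _ b _ h => hinj h)]

lemma edge_alg (e : Finset (Fin n)) (he : e.card = m+1) (x : Fin n → ℝ) :
    ∑ j ∈ e, ((m : ℝ) * x j ^ 2 - x j * ∑ v ∈ e.erase j, x v)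
      = ∑ i ∈ e, ∑ j ∈ e, if i < j then (x i - x j)^2 else 0 := by
  have key : ∀ i ∈ e, ∀ j ∈ e, ((if i < j then (x i - x j)^2 else 0)
      + (if j < i then (x j - x i)^2 else 0)) = (x i - x j)^2 := by
    intro i _ j _
    rcases lt_trichotomy i j with h | h | h
    · simp [h, not_lt_of_gt h]
    · simp [h]
    · rw [if_neg (not_lt_of_gt h), if_pos h, zero_add]; ring
  have h2 : (2:ℝ) * ∑ i ∈ e, ∑ j ∈ e, (if i < j then (x i - x j)^2 else 0)
      = ∑ i ∈ e, ∑ j ∈ e, (x i - x j)^2 := by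
    rw [two_mul]
    nth_rewrite 2 [Finset.sum_comm]
    rw [← Finset.sum_add_distrib]
    refine Finset.sum_congr rfl fun i hi => ?_
    rw [← Finset.sum_add_distrib]
    exact Finset.sum_congr rfl fun j hj => key i hi j hj
  have h3 : ∑ i ∈ e, ∑ j ∈ e, (x i - x j)^2
      = 2 * ((m:ℝ)+1) * ∑ v ∈ e, x v ^ 2 - 2 * (∑ v ∈ e, x v)^2 := by
    have h5 : ∀ i ∈ e, ∑ j ∈ e, (x i - x j)^2
        = (m+1 : ℝ) * x i ^2 - 2 * x i * (∑ v ∈ e, x v) + ∑ v ∈ e, x v ^ 2 := by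
      intro i _
      have expand : ∀ j ∈ e, (x i - x j)^2 = x i ^2 - 2 * x i * x j + x j ^2 :=
        fun j _ => by ring
      rw [Finset.sum_congr rfl expand, Finset.sum_add_distrib, Finset.sum_sub_distrib,
        Finset.sum_const, he, ← Finset.mul_sum]
      ring
    rw [Finset.sum_congr rfl h5, Finset.sum_add_distrib, Finset.sum_sub_distrib,
      Finset.sum_const, he]
    have h6 : ∑ i ∈ e, 2 * x i * (∑ v ∈ e, x v) = 2 * (∑ v ∈ e, x v)^2 := by
      rw [← Finset.sum_mul]; rw [← Finset.mul_sum]; ring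
    rw [h6, ← Finset.mul_sum]
    ring
  have h4 : ∑ j ∈ e, ((m : ℝ) * x j ^ 2 - x j * ∑ v ∈ e.erase j, x v)
      = ((m:ℝ)+1) * ∑ v ∈ e, x v ^ 2 - (∑ v ∈ e, x v)^2 := by
    have h5 : ∀ j ∈ e, (m : ℝ) * x j ^ 2 - x j * ∑ v ∈ e.erase j, x v
        = ((m:ℝ)+1) * x j ^2 - x j * ∑ v ∈ e, x v := by
      intro j hj
      rw [← Finset.add_sum_erase e x hj]
      ring
    rw [Finset.sum_congr rfl h5, Finset.sum_sub_distrib, ← Finset.mul_sum]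
    have h6 : ∑ j ∈ e, x j * ∑ v ∈ e, x v = (∑ v ∈ e, x v)^2 := by
      rw [← Finset.sum_mul]; ring
    rw [h6]
  nlinarith [h2, h3, h4]

end aux

/-- The Laplacian quadratic form of an (m+1)-uniform undirected hypergraph satisfies
`x^T L x = ∑_{E ∈ E} ∑_{i<j, v_i,v_j ∈ E} (x_i-x_j)^2 ≥ 0`: positive semi-definiteness. -/
theorem stmt1 {n m : ℕ} (Es : Finset (Finset (Fin n)))
    (hU : ∀ e ∈ Es, e.card = m + 1) (x : Fin n → ℝ) :
    (qf (LapT (adjH m Es)) x =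
      ∑ e ∈ Es, ∑ i ∈ e, ∑ j ∈ e, if i < j then (x i - x j)^2 else 0) ∧
    0 ≤ qf (LapT (adjH m Es)) x := by
  have hsplit : ∀ (j : Fin n) (i : Fin m → Fin n) (g : ℝ), adjH m Es i j * g =
      ∑ e ∈ Es, (if Function.Injective (Fin.snoc i j : Fin (m+1) → Fin n) ∧
        Finset.image (Fin.snoc i j : Fin (m+1) → Fin n) Finset.univ = e
        then (1 / (m.factorial : ℝ)) * g else 0) := by
    intro j i g
    unfold adjH
    by_cases hP : Function.Injective (Fin.snoc i j : Fin (m+1) → Fin n)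
    · simp only [hP, true_and]
      rw [Finset.sum_ite_eq]
      by_cases hQ : Finset.image (Fin.snoc i j : Fin (m+1) → Fin n) Finset.univ ∈ Es <;>
        simp [hQ]
    · simp [hP]
  have hdeg : ∀ j : Fin n, degT (adjH m Es) j = ∑ e ∈ Es, if j ∈ e then (1:ℝ) else 0 := by
    intro j
    unfold degT
    have h1 : ∀ i : Fin m → Fin n, adjH m Es i j = adjH m Es i j * 1 := fun i => (mul_one _).symm
    rw [Finset.sum_congr rfl fun i _ => h1 i]
    rw [Finset.sum_congr rfl fun i _ => hsplit j i 1, Finset.sum_comm]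
    refine Finset.sum_congr rfl fun e he => ?_
    exact sum_cond e (hU e he) j (fun _ => 1) 1 (fun _ _ _ _ => rfl)
  have hS : ∀ j : Fin n, (∑ i : Fin m → Fin n, adjH m Es i j * ∑ p : Fin m, x (i p))
      = ∑ e ∈ Es, if j ∈ e then (∑ v ∈ e.erase j, x v) else 0 := by
    intro j
    rw [Finset.sum_congr rfl fun i _ => hsplit j i (∑ p : Fin m, x (i p)), Finset.sum_comm]
    refine Finset.sum_congr rfl fun e he => ?_
    refine sum_cond e (hU e he) j _ _ ?_
    intro hj i hinj hmem
    exact sum_over_image i hinj (e.erase j)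
      (by rw [Finset.card_erase_of_mem hj, hU e he]; rfl) hmem x
  have hdiag : ∀ j : Fin n, (∑ i : Fin m → Fin n,
      (if ∀ p, i p = j then degT (adjH m Es) j else 0) * ∑ p : Fin m, x (i p))
      = degT (adjH m Es) j * ((m : ℝ) * x j) := by
    intro j
    rw [Finset.sum_eq_single (fun _ => j)]
    · simp [Finset.sum_const, mul_comm]
    · intro i _ hne
      rw [if_neg, zero_mul]
      intro h
      exact hne (funext h)
    · simp
  have key : qf (LapT (adjH m Es)) x
      = ∑ e ∈ Es, ∑ i ∈ e, ∑ j ∈ e, if i < j then (x i - x j)^2 else 0 := by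
    unfold qf LapT
    have step1 : ∀ j : Fin n,
        (∑ i : Fin m → Fin n, ((if ∀ p, i p = j then degT (adjH m Es) j else 0) - adjH m Es i j)
          * ∑ p : Fin m, x (i p))
        = degT (adjH m Es) j * ((m : ℝ) * x j)
          - ∑ i : Fin m → Fin n, adjH m Es i j * ∑ p : Fin m, x (i p) := by
      intro j
      rw [Finset.sum_congr rfl fun i _ => sub_mul _ _ _, Finset.sum_sub_distrib, hdiag j]
    rw [Finset.sum_congr rfl fun j _ => congrArg (· * x j) (step1 j)]
    have step2 : ∀ j : Fin n,
        (degT (adjH m Es) j * ((m : ℝ) * x j)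
          - ∑ i : Fin m → Fin n, adjH m Es i j * ∑ p : Fin m, x (i p)) * x j
        = ∑ e ∈ Es, (if j ∈ e then ((m : ℝ) * x j ^ 2 - x j * ∑ v ∈ e.erase j, x v) else 0) := by
      intro j
      rw [hdeg j, hS j, Finset.sum_mul, ← Finset.sum_sub_distrib, Finset.sum_mul]
      refine Finset.sum_congr rfl fun e _ => ?_
      by_cases hj : j ∈ e
      · simp only [hj, if_pos]
        ring
      · simp [hj]
    rw [Finset.sum_congr rfl fun j _ => step2 j, Finset.sum_comm]
    refine Finset.sum_congr rfl fun e he => ?_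
    rw [Finset.sum_ite_mem, Finset.univ_inter]
    exact edge_alg e (hU e he) x
  refine ⟨key, ?_⟩
  rw [key]
  refine Finset.sum_nonneg fun e _ => Finset.sum_nonneg fun i _ => Finset.sum_nonneg fun j _ => ?_
  split
  · exact sq_nonneg _
  · exact le_rfl
end

section
/- The algebraic connectivity of an (m+1)-uniform undirected hypergraph G is zero if and only if G is not connected, and a(G) > 0 if G is connected (for G with at least 2 vertices). -/
/-!
A vector `x` with `Qform Es x = 0` is constant on every hyperedge, hence on every connected
component. If the hypergraph is connected, such an `x` is constant, so it cannot have zero sum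
and unit norm; as the constraint set is compact and nonempty (`n ≥ 2`) and `Qform Es` is
continuous, the infimum is attained and is therefore positive. If the hypergraph is disconnected,
the centred and normalised indicator vector of a connected component is admissible and has
`Qform Es = 0`.
-/

open Finset

/-- `∑_{i<j, v_i,v_j ∈ e} (x_i - x_j)^2`, the Laplacian quadratic form of a single hyperedge. -/
def pairSum {n : ℕ} (e : Finset (Fin n)) (x : Fin n → ℝ) : ℝ :=
  ∑ i ∈ e, ∑ j ∈ e, if i < j then (x i - x j)^2 else 0

/-- The Laplacian quadratic form `x^T L x = ∑_{E ∈ Es} ∑_{i<j ∈ E} (x_i - x_j)^2`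
of a uniform undirected hypergraph under the compatible tensor product. -/
def Qform {n : ℕ} (Es : Finset (Finset (Fin n))) (x : Fin n → ℝ) : ℝ :=
  ∑ e ∈ Es, pairSum e x

/-- Algebraic connectivity of a hypergraph on the vertex set `V`:
`a(G) = min { x^T L x : x ⊥ 1, ‖x‖₂ = 1 }`, the vectors being supported on `V`. -/
noncomputable def algConOn {n : ℕ} (V : Finset (Fin n))
    (Es : Finset (Finset (Fin n))) : ℝ :=
  sInf {y : ℝ | ∃ x : Fin n → ℝ, (∀ i ∉ V, x i = 0) ∧ (∑ i ∈ V, x i = 0) ∧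
    (∑ i ∈ V, (x i)^2 = 1) ∧ y = Qform Es x}

/-- Two vertices are joined by a hyperpath iff related by the reflexive-transitive closure
of "sharing a hyperedge". -/
def HConnected {n : ℕ} (Es : Finset (Finset (Fin n))) : Prop :=
  ∀ u v : Fin n, Relation.ReflTransGen (fun a b => ∃ e ∈ Es, a ∈ e ∧ b ∈ e) u v

variable {n : ℕ}

lemma pairSum_nonneg (e : Finset (Fin n)) (x : Fin n → ℝ) : 0 ≤ pairSum e x :=
  sum_nonneg fun i _ => sum_nonneg fun j _ => by split_ifs <;> positivity

lemma Qform_nonneg (Es : Finset (Finset (Fin n))) (x : Fin n → ℝ) : 0 ≤ Qform Es x :=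
  sum_nonneg fun e _ => pairSum_nonneg e x

lemma pairSum_eq_zero_iff {e : Finset (Fin n)} {x : Fin n → ℝ} :
    pairSum e x = 0 ↔ ∀ i ∈ e, ∀ j ∈ e, x i = x j := by
  have hterm : ∀ i j, 0 ≤ if i < j then (x i - x j) ^ 2 else 0 := fun i j => by
    split_ifs <;> positivity
  simp only [pairSum, sum_eq_zero_iff_of_nonneg fun i _ => sum_nonneg fun j _ => hterm i j,
    sum_eq_zero_iff_of_nonneg fun j _ => hterm _ j, ite_eq_right_iff, pow_eq_zero_iff two_ne_zero,
    sub_eq_zero]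
  refine ⟨fun h i hi j hj => ?_, fun h i hi j hj _ => h i hi j hj⟩
  rcases lt_trichotomy i j with hij | rfl | hij
  · exact h i hi j hj hij
  · rfl
  · exact (h j hj i hi hij).symm

lemma Qform_eq_zero_iff {Es : Finset (Finset (Fin n))} {x : Fin n → ℝ} :
    Qform Es x = 0 ↔ ∀ e ∈ Es, ∀ i ∈ e, ∀ j ∈ e, x i = x j := by
  simp only [Qform, sum_eq_zero_iff_of_nonneg fun e _ => pairSum_nonneg e x, pairSum_eq_zero_iff]

lemma continuous_Qform (Es : Finset (Finset (Fin n))) : Continuous (Qform Es) := by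
  unfold Qform pairSum
  refine continuous_finsetSum _ fun e _ => continuous_finsetSum _ fun i _ =>
    continuous_finsetSum _ fun j _ => ?_
  split_ifs <;> fun_prop

def zeroSumUnitVectors (n : ℕ) : Set (Fin n → ℝ) :=
  {x | ∑ i, x i = 0 ∧ ∑ i, x i ^ 2 = 1}

lemma algConOn_univ_eq_sInf_image (Es : Finset (Finset (Fin n))) :
    algConOn univ Es = sInf (Qform Es '' zeroSumUnitVectors n) := by
  unfold algConOn
  congr 1
  ext y
  simp [zeroSumUnitVectors, eq_comm, and_assoc]

lemma isCompact_zeroSumUnitVectors (n : ℕ) : IsCompact (zeroSumUnitVectors n) := by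
  have hclosed : IsClosed (zeroSumUnitVectors n) :=
    (isClosed_eq (by fun_prop) continuous_const).inter (isClosed_eq (by fun_prop) continuous_const)
  refine (isCompact_closedBall (0 : Fin n → ℝ) 1).of_isClosed_subset hclosed fun x hx => ?_
  rw [mem_closedBall_zero_iff, pi_norm_le_iff_of_nonneg zero_le_one]
  intro i
  rw [Real.norm_eq_abs, ← sq_le_one_iff_abs_le_one, ← hx.2]
  exact single_le_sum (f := fun j => x j ^ 2) (fun j _ => sq_nonneg _) (mem_univ i)

lemma inv_sqrt_smul_mem_zeroSumUnitVectors {y : Fin n → ℝ} (hsum : ∑ i, y i = 0) (hy : y ≠ 0) :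
    (√(∑ i, y i ^ 2))⁻¹ • y ∈ zeroSumUnitVectors n := by
  have hpos : 0 < ∑ i, y i ^ 2 := by
    obtain ⟨i, hi⟩ := Function.ne_iff.mp hy
    exact sum_pos' (fun j _ => sq_nonneg _) ⟨i, mem_univ i, sq_pos_iff.mpr hi⟩
  refine ⟨?_, ?_⟩
  · simp [← mul_sum, hsum]
  · simp only [Pi.smul_apply, smul_eq_mul, mul_pow, ← mul_sum, inv_pow, Real.sq_sqrt hpos.le]
    exact inv_mul_cancel₀ hpos.ne'

lemma exists_mem_zeroSumUnitVectors_of_mem_of_not_mem {C : Finset (Fin n)} {u v : Fin n}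
    (hu : u ∈ C) (hv : v ∉ C) :
    ∃ x ∈ zeroSumUnitVectors n, ∀ i j, (i ∈ C ↔ j ∈ C) → x i = x j := by
  set y : Fin n → ℝ := fun i => (if i ∈ C then 1 else 0) - (#C : ℝ) / n
  have hn : (n : ℝ) ≠ 0 := by have := u.pos; positivity
  have hsum : ∑ i, y i = 0 := by
    simp [y, sum_sub_distrib, mul_div_cancel₀ _ hn]
  have hy : y ≠ 0 := fun h => by
    have hyu := congr_fun h u
    have hyv := congr_fun h v
    simp only [y, hu, hv, if_true, if_false, Pi.zero_apply] at hyu hyv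
    linarith
  refine ⟨_, inv_sqrt_smul_mem_zeroSumUnitVectors hsum hy, fun i j hij => ?_⟩
  simp only [Pi.smul_apply, y, hij]

lemma zeroSumUnitVectors_nonempty (hn : 2 ≤ n) : (zeroSumUnitVectors n).Nonempty := by
  obtain ⟨x, hx, -⟩ := exists_mem_zeroSumUnitVectors_of_mem_of_not_mem
    (C := {⟨0, by omega⟩}) (v := ⟨1, hn⟩) (mem_singleton_self _) (by simp [Fin.ext_iff])
  exact ⟨x, hx⟩

lemma Qform_pos_of_hConnected {Es : Finset (Finset (Fin n))} (hconn : HConnected Es)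
    {x : Fin n → ℝ} (hx : x ∈ zeroSumUnitVectors n) : 0 < Qform Es x := by
  refine (Qform_nonneg Es x).lt_of_ne' fun h0 => ?_
  have hedge := Qform_eq_zero_iff.mp h0
  have hconst : ∀ i j, x i = x j := fun i j => by
    have := (hconn i j).lift x fun a b ⟨e, he, ha, hb⟩ => hedge e he a ha b hb
    rwa [Function.onFun, Relation.reflTransGen_eq_self] at this
  obtain ⟨hsum, hsq⟩ := hx
  have hzero : ∀ i, x i = 0 := fun i => by
    have hn : (n : ℝ) ≠ 0 := by have := i.pos; positivity
    have : (n : ℝ) * x i = 0 := by simpa [← hconst i] using hsum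
    exact (mul_eq_zero.mp this).resolve_left hn
  simp [hzero] at hsq

lemma algConOn_univ_pos_of_hConnected (hn : 2 ≤ n) {Es : Finset (Finset (Fin n))}
    (hconn : HConnected Es) : 0 < algConOn univ Es := by
  obtain ⟨x, hx, hmin⟩ := ((isCompact_zeroSumUnitVectors n).image
    (continuous_Qform Es)).sInf_mem ((zeroSumUnitVectors_nonempty hn).image _)
  rw [algConOn_univ_eq_sInf_image, ← hmin]
  exact Qform_pos_of_hConnected hconn hx

lemma algConOn_univ_eq_zero_of_not_hConnected {Es : Finset (Finset (Fin n))}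
    (hdisconn : ¬ HConnected Es) : algConOn univ Es = 0 := by
  classical
  set r : Fin n → Fin n → Prop := fun a b => ∃ e ∈ Es, a ∈ e ∧ b ∈ e
  obtain ⟨u, v, huv⟩ : ∃ u v, ¬ Relation.ReflTransGen r u v := by
    simpa [HConnected] using hdisconn
  set C := univ.filter (Relation.ReflTransGen r u)
  obtain ⟨x, hx, hxC⟩ :=
    exists_mem_zeroSumUnitVectors_of_mem_of_not_mem (C := C) (u := u) (v := v)
    (mem_filter.2 ⟨mem_univ u, .refl⟩) (by simpa [C] using huv)
  have hQ : Qform Es x = 0 := Qform_eq_zero_iff.mpr fun e he i hi j hj => hxC i j <| by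
    simp only [C, mem_filter, mem_univ, true_and]
    exact ⟨fun h => h.tail ⟨e, he, hi, hj⟩, fun h => h.tail ⟨e, he, hj, hi⟩⟩
  have hnonneg : ∀ y ∈ Qform Es '' zeroSumUnitVectors n, 0 ≤ y :=
    Set.forall_mem_image.2 fun y _ => Qform_nonneg Es y
  rw [algConOn_univ_eq_sInf_image]
  exact le_antisymm (hQ ▸ csInf_le ⟨0, hnonneg⟩ ⟨x, hx, rfl⟩) (Real.sInf_nonneg hnonneg)

theorem stmt2_general {n : ℕ} (hn : 2 ≤ n) (Es : Finset (Finset (Fin n))) :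
    (algConOn Finset.univ Es = 0 ↔ ¬ HConnected Es) ∧
    (HConnected Es → 0 < algConOn Finset.univ Es) :=
  ⟨⟨fun h0 hconn => (algConOn_univ_pos_of_hConnected hn hconn).ne' h0,
    algConOn_univ_eq_zero_of_not_hConnected⟩, algConOn_univ_pos_of_hConnected hn⟩

/-- The algebraic connectivity of an (m+1)-uniform undirected hypergraph (on at least two
vertices) is zero iff the hypergraph is not connected, and is positive if it is connected. -/
theorem stmt2 {n m : ℕ} (hn : 2 ≤ n) (Es : Finset (Finset (Fin n)))
    (hU : ∀ e ∈ Es, e.card = m + 1) :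
    (algConOn Finset.univ Es = 0 ↔ ¬ HConnected Es) ∧
    (HConnected Es → 0 < algConOn Finset.univ Es) :=
  stmt2_general hn Es
end

section
/- The compatible tensor product is associative: for tensors A ∈ T_{m+1,n}, B ∈ T_{k+1,n}, C ∈ T_{l+1,n}, one has (A * B) * C = A * (B * C). -/
open Finset

/-- The compatible tensor product of `A ∈ T_{m+1,n}` and `B ∈ T_{k+1,n}` (tensors are given
by their first `m` (resp. `k`) indices and their last index):
`(A*B)_{i_1,…,i_m,j} = ∑_{j_1,…,j_k,t} A_{i_1,…,i_m,t} B_{j_1,…,j_k,j} δ(t ∈ {j_1,…,j_k})`. -/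
def cprod {n m k : ℕ} (A : (Fin m → Fin n) → Fin n → ℝ)
    (B : (Fin k → Fin n) → Fin n → ℝ) : (Fin m → Fin n) → Fin n → ℝ :=
  fun i last => ∑ t : Fin n, ∑ j : Fin k → Fin n,
    A i t * B j last * (if ∃ p, j p = t then (1 : ℝ) else 0)

lemma swap4_stmt10 {α β γ δ : Type*} [Fintype α] [Fintype β] [Fintype γ] [Fintype δ]
    (f : α → β → γ → δ → ℝ) :
    ∑ a, ∑ b, ∑ c, ∑ d, f a b c d = ∑ c, ∑ d, ∑ a, ∑ b, f a b c d := by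
  have h1 : ∀ a : α, ∑ b, ∑ c, ∑ d, f a b c d = ∑ c, ∑ d, ∑ b, f a b c d := fun a =>
    (Finset.sum_comm).trans (Finset.sum_congr rfl fun c _ => Finset.sum_comm)
  calc ∑ a, ∑ b, ∑ c, ∑ d, f a b c d
      = ∑ a, ∑ c, ∑ d, ∑ b, f a b c d := Finset.sum_congr rfl fun a _ => h1 a
    _ = ∑ c, ∑ a, ∑ d, ∑ b, f a b c d := Finset.sum_comm
    _ = ∑ c, ∑ d, ∑ a, ∑ b, f a b c d := Finset.sum_congr rfl fun c _ => Finset.sum_comm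

/-- The compatible tensor product is associative: `(A * B) * C = A * (B * C)`. -/
theorem stmt10 {n m k l : ℕ} (A : (Fin m → Fin n) → Fin n → ℝ)
    (B : (Fin k → Fin n) → Fin n → ℝ) (C : (Fin l → Fin n) → Fin n → ℝ) :
    cprod (cprod A B) C = cprod A (cprod B C) := by
  funext i last
  simp only [cprod, Finset.sum_mul, Finset.mul_sum]
  rw [swap4_stmt10]
  refine Finset.sum_congr rfl fun s _ => Finset.sum_congr rfl fun u _ =>
    Finset.sum_congr rfl fun t _ => Finset.sum_congr rfl fun j _ => by ring
end

section
/- For any (m+1)-uniform hypergraph G with m ≥ 1 and its clique reduction r(G) (replacing each hyperedge by a clique on its vertices, allowing multiple edges), the vertex connectivities satisfy v(G) ≤ v(r(G)). -/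
open Finset

/-- Hyperpath-connectivity after removing the vertex set `S` from a hypergraph: removing a
vertex from a hypergraph removes every hyperedge containing it, so only hyperedges disjoint
from `S` survive. -/
def hypCutset {n : ℕ} (Es : Finset (Finset (Fin n))) (S : Finset (Fin n)) : Prop :=
  ∃ u v : Fin n, u ∉ S ∧ v ∉ S ∧
    ¬ Relation.ReflTransGen
        (fun a b => a ∉ S ∧ b ∉ S ∧ ∃ e ∈ Es, e ∩ S = ∅ ∧ a ∈ e ∧ b ∈ e) u v

/-- Connectivity after removing `S` from the clique reduction `r(G)`: an edge of `r(G)` joins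
any two distinct vertices lying in a common hyperedge, and removing `S` from the graph only
removes the edges incident to `S`. -/
def redCutset {n : ℕ} (Es : Finset (Finset (Fin n))) (S : Finset (Fin n)) : Prop :=
  ∃ u v : Fin n, u ∉ S ∧ v ∉ S ∧
    ¬ Relation.ReflTransGen
        (fun a b => a ∉ S ∧ b ∉ S ∧ a ≠ b ∧ ∃ e ∈ Es, a ∈ e ∧ b ∈ e) u v

/-- For any (m+1)-uniform hypergraph `G` and its clique reduction `r(G)`, the vertex
connectivities (least cardinalities of cutsets) satisfy `v(G) ≤ v(r(G))`. -/
theorem stmt19 {n m vG vR : ℕ} (hm : 1 ≤ m) (Es : Finset (Finset (Fin n)))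
    (hU : ∀ e ∈ Es, e.card = m + 1)
    (hvG : IsLeast {k : ℕ | ∃ S : Finset (Fin n), S.card = k ∧ hypCutset Es S} vG)
    (hvR : IsLeast {k : ℕ | ∃ S : Finset (Fin n), S.card = k ∧ redCutset Es S} vR) :
    vG ≤ vR := by
  obtain ⟨S, hScard, u, v, hu, hv, hnot⟩ := hvR.1
  apply hvG.2
  refine ⟨S, hScard, u, v, hu, hv, fun h => hnot ?_⟩
  clear hv hnot
  induction h with
  | refl => exact .refl
  | @tail b c _ h2 ih =>
    obtain ⟨ha, hb, e, he, heS, hae, hbe⟩ := h2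
    rcases eq_or_ne b c with rfl | hne
    · exact ih
    · exact ih.tail ⟨ha, hb, hne, e, he, hae, hbe⟩
end
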